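/- Let y₁,…,y_R be elements of a metric space (with distance d) and x* a point such that the set S = {i : d(yᵢ, x*) ≤ ε} has |S| > (3/4)·R. Define j* = argmin_j median_i d(yⱼ, yᵢ). Then d(y_{j*}, x*) ≤ 3ε. -/

import Mathlib

/-!
The indices `S = {i | d(y i, x*) ≤ ε}` form a strict majority. For `j ∈ S`, all `y i` with
`i ∈ S` lie within `2ε` of `y j`, so the median of `i ↦ d(y j, y i)` is at most `2ε`. For any
`j`, at least half of the indices lie within that median of `y j`; this half meets `S`, so `y j`
is within its median plus `ε` of `x*`. Applied to the minimiser `j*`, this gives `2ε + ε`.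
-/

/-- The median of a finite list of reals: its `⌈n/2⌉`-th smallest element. -/
noncomputable def medianList (l : List ℝ) : ℝ :=
  (List.insertionSort (· ≤ ·) l).getD ((l.length + 1) / 2 - 1) 0

open Finset

theorem List.countP_ofFn {α : Type*} {n : ℕ} (f : Fin n → α) (p : α → Prop)
    [DecidablePred p] :
    (List.ofFn f).countP (p ·) = #{i | p (f i)} := by
  rw [← Multiset.coe_countP, ← Fin.univ_val_map, Multiset.countP_map]
  rfl

theorem List.Pairwise.getElem_le_iff_lt_countP {α : Type*} [LinearOrder α] {s : List α}
    (hs : s.Pairwise (· ≤ ·)) {m : ℕ} (hm : m < s.length) (c : α) :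
    s[m] ≤ c ↔ m < s.countP (· ≤ c) := by
  have hsplit : s = s.take m ++ s[m] :: s.drop (m + 1) := by
    rw [← List.drop_eq_getElem_cons hm, List.take_append_drop]
  have hpair := hs
  rw [hsplit, List.pairwise_append, List.pairwise_cons] at hpair
  obtain ⟨-, ⟨hge, -⟩, hle⟩ := hpair
  have htake : (s.take m).length = m := List.length_take_of_le hm.le
  conv_rhs => rw [hsplit, List.countP_append, List.countP_cons]
  constructor
  · intro h
    have : (s.take m).countP (· ≤ c) = m := by
      rw [List.countP_eq_length.mpr, htake]
      intro a ha
      simpa using (hle a ha _ List.mem_cons_self).trans h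
    simp [this, h]
  · intro h
    by_contra! hc
    have hdrop : (s.drop (m + 1)).countP (· ≤ c) = 0 := by
      rw [List.countP_eq_zero]
      intro b hb
      simpa using hc.trans_le (hge b hb)
    have := (s.take m).countP_le_length (p := (· ≤ c))
    simp only [hdrop, hc.not_ge, decide_false, Bool.false_eq_true, if_false] at h
    omega

theorem medianList_le_iff {l : List ℝ} (hl : l ≠ []) (c : ℝ) :
    medianList l ≤ c ↔ (l.length + 1) / 2 ≤ l.countP (· ≤ c) := by
  have hlen : (l.insertionSort (· ≤ ·)).length = l.length := List.length_insertionSort _ _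
  have hk : (l.length + 1) / 2 - 1 < (l.insertionSort (· ≤ ·)).length := by
    have := List.length_pos_iff.mpr hl
    omega
  rw [medianList, List.getD_eq_getElem _ _ hk,
    (List.pairwise_insertionSort _ _).getElem_le_iff_lt_countP hk,
    (List.perm_insertionSort _ _).countP_eq]
  omega

theorem medianList_ofFn_le_iff {n : ℕ} (hn : 0 < n) (f : Fin n → ℝ) (c : ℝ) :
    medianList (List.ofFn f) ≤ c ↔ (n + 1) / 2 ≤ #{i | f i ≤ c} := by
  rw [medianList_le_iff (List.ne_nil_of_length_pos (by simpa using hn)), List.countP_ofFn,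
    List.length_ofFn]

noncomputable def medianDist {M : Type*} [PseudoMetricSpace M] {n : ℕ} (y : Fin n → M)
    (j : Fin n) : ℝ :=
  medianList (List.ofFn fun i => dist (y j) (y i))

section MedianDist

variable {M : Type*} [PseudoMetricSpace M] {n : ℕ} (y : Fin n → M) {x : M} {ε : ℝ}

theorem medianDist_le_of_dist_le (hS : n < 2 * #{i | dist (y i) x ≤ ε}) {j : Fin n}
    (hj : dist (y j) x ≤ ε) : medianDist y j ≤ 2 * ε := by
  rw [medianDist, medianList_ofFn_le_iff j.pos]
  have hsub : ({i | dist (y i) x ≤ ε} : Finset (Fin n)) ⊆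
      ({i | dist (y j) (y i) ≤ 2 * ε} : Finset (Fin n)) := by
    intro i hi
    simp only [mem_filter, mem_univ, true_and] at hi ⊢
    linarith [dist_triangle_right (y j) (y i) x]
  have := card_le_card hsub
  omega

theorem dist_le_medianDist_add (hS : n < 2 * #{i | dist (y i) x ≤ ε}) (j : Fin n) :
    dist (y j) x ≤ medianDist y j + ε := by
  have hnear : (n + 1) / 2 ≤ #({i | dist (y j) (y i) ≤ medianDist y j} : Finset (Fin n)) :=
    (medianList_ofFn_le_iff j.pos _ _).mp le_rfl
  obtain ⟨r, hr⟩ : (({i | dist (y i) x ≤ ε} : Finset (Fin n)) ∩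
      ({i | dist (y j) (y i) ≤ medianDist y j} : Finset (Fin n))).Nonempty := by
    apply inter_nonempty_of_card_lt_card_add_card (subset_univ _) (subset_univ _)
    rw [card_univ, Fintype.card_fin]
    omega
  simp only [mem_inter, mem_filter, mem_univ, true_and] at hr
  linarith [dist_triangle (y j) (y r) x]

end MedianDist

theorem min_of_medians_general {M : Type*} [MetricSpace M]
    (R : ℕ) (y : Fin R → M) (xstar : M) (ε : ℝ)
    (hS : (3 : ℝ) / 4 * R <
      ((Finset.univ.filter (fun i => dist (y i) xstar ≤ ε)).card : ℝ))
    (jstar : Fin R)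
    (hjstar : ∀ j, medianList (List.ofFn (fun i => dist (y jstar) (y i)))
        ≤ medianList (List.ofFn (fun i => dist (y j) (y i)))) :
    dist (y jstar) xstar ≤ 3 * ε := by
  have hmajority : R < 2 * #{i | dist (y i) xstar ≤ ε} := by
    have : (0 : ℝ) ≤ R := R.cast_nonneg
    exact_mod_cast (by linarith : (R : ℝ) < 2 * #{i | dist (y i) xstar ≤ ε})
  obtain ⟨j₀, -, hj₀⟩ := filter_nonempty_iff.mp (card_pos.mp (by omega :
    0 < #({i | dist (y i) xstar ≤ ε} : Finset (Fin R))))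
  calc dist (y jstar) xstar ≤ medianDist y jstar + ε := dist_le_medianDist_add y hmajority jstar
    _ ≤ medianDist y j₀ + ε := by gcongr; exact hjstar j₀
    _ ≤ 2 * ε + ε := by gcongr; exact medianDist_le_of_dist_le y hmajority hj₀
    _ = 3 * ε := by ring

theorem min_of_medians {M : Type*} [MetricSpace M]
    (R : ℕ) (hR : 0 < R) (y : Fin R → M) (xstar : M) (ε : ℝ) (hε : 0 ≤ ε)
    (hS : (3 : ℝ) / 4 * R <
      ((Finset.univ.filter (fun i => dist (y i) xstar ≤ ε)).card : ℝ))
    (jstar : Fin R)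
    (hjstar : ∀ j, medianList (List.ofFn (fun i => dist (y jstar) (y i)))
        ≤ medianList (List.ofFn (fun i => dist (y j) (y i)))) :
    dist (y jstar) xstar ≤ 3 * ε :=
  min_of_medians_general R y xstar ε hS jstar hjstar
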